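/- arXiv:1002.4614 — 4 statements merged into one kernel-verified Lean document; each statement's English description precedes it below -/
import Mathlib

section
/- Let c be a finite non-empty binary word. Then F(c) = F(c^∞), where c^∞ denotes the periodic infinite sequence obtained by repeating c. -/
open Filter MeasureTheory

/-- Left shift by `k` on infinite binary sequences. -/
def shiftSeq (k : ℕ) (x : ℕ → Bool) : ℕ → Bool := fun n => x (n + k)

/-- Strict lexicographic order on infinite binary sequences (`false < true`). -/
def seqLt (a b : ℕ → Bool) : Prop :=
  ∃ n, (∀ k < n, a k = b k) ∧ a n = false ∧ b n = true

def seqLe (a b : ℕ → Bool) : Prop := a = b ∨ seqLt a b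

/-- A finite word viewed as an infinite sequence (padded with zeros). -/
def wordSeq (w : List Bool) : ℕ → Bool := fun n => w.getD n false

/-- Bitwise complement of an infinite sequence. -/
def complSeq (a : ℕ → Bool) : ℕ → Bool := fun n => ! a n

/-- `F(c) = {x : c' ≥ σⁿ(x) ≥ c for all n ≥ 0}` for an infinite bound `c`. -/
def Fset (c : ℕ → Bool) : Set (ℕ → Bool) :=
  {x | ∀ n : ℕ, seqLe c (shiftSeq n x) ∧ seqLe (shiftSeq n x) (complSeq c)}

/-- The real number in `[0,1]` with binary expansion `x`. -/
noncomputable def seqVal (x : ℕ → Bool) : ℝ :=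
  ∑' n : ℕ, (cond (x n) (1 : ℝ) 0) / 2 ^ (n + 1)

/-- The periodic infinite sequence `w^∞`. -/
def perSeq (w : List Bool) : ℕ → Bool := fun n => w.getD (n % w.length) false

/-- `s̃`: the word `s` with its last symbol inverted. -/
def flipLast (s : List Bool) : List Bool :=
  s.dropLast ++ [! s.getD (s.length - 1) false]

/-- `f(s) = s̃ s'` where `s'` is the bitwise complement of `s`. -/
def fW (s : List Bool) : List Bool := flipLast s ++ s.map (fun b => !b)

/-- A finite word `s` is shift-bounded: `s' > σⁿ(s) > s` for `0 < n < |s|`,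
comparisons via the embedding of finite words into infinite sequences
(`s` padded with zeros, `s'` is the complement of the padded sequence);
by convention `[false]` is excluded. -/
def ShiftBounded (s : List Bool) : Prop :=
  s ≠ [false] ∧ ∀ n, 0 < n → n < s.length →
    seqLt (wordSeq s) (wordSeq (s.drop n)) ∧
    seqLt (wordSeq (s.drop n)) (complSeq (wordSeq s))

/-- Prepend a finite word to an infinite sequence. -/
def appendSeq (w : List Bool) (t : ℕ → Bool) : ℕ → Bool :=
  fun n => if n < w.length then w.getD n false else t (n - w.length)

/-- `w^k`: the word `w` repeated `k` times. -/
def repWord (k : ℕ) (w : List Bool) : List Bool :=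
  (List.replicate k w).foldr (· ++ ·) []

/-- The infinite concatenation of the finite words `g 0, g 1, g 2, …`
(assuming all are nonempty, the `n`-th symbol is obtained from the first
`n+1` blocks). -/
def concatSeq (g : ℕ → List Bool) : ℕ → Bool :=
  fun n => (((List.range (n + 1)).map g).foldr (· ++ ·) []).getD n false


/-! Complementation reverses the lexicographic order, so `x ∈ F(a)` says that all shifts of both
`x` and `x'` lie above `a`.
Since `c0^∞ ≤ c^∞`, only one inclusion needs an argument: if some shift of `y` falls below `c^∞`,
at a first difference in position `r + q |c|` with `r < |c|`, then shifting `q |c|` further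
produces a shift of `y` below `c0^∞`. -/

lemma complSeq_complSeq (a : ℕ → Bool) : complSeq (complSeq a) = a :=
  funext fun n => Bool.not_not (a n)

section Order

variable {a b : ℕ → Bool}

lemma seqLt_iff_toLex_lt : seqLt a b ↔ toLex a < toLex b := by
  show _ ↔ ∃ i, (∀ j < i, a j = b j) ∧ a i < b i
  simp only [seqLt, Bool.lt_iff]

lemma seqLe_iff_toLex_le : seqLe a b ↔ toLex a ≤ toLex b := by
  rw [seqLe, seqLt_iff_toLex_lt, le_iff_eq_or_lt, toLex_inj]
  exact Iff.rfl

lemma seqLe_trans {c : ℕ → Bool} (hab : seqLe a b) (hbc : seqLe b c) : seqLe a c :=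
  seqLe_iff_toLex_le.mpr <| (seqLe_iff_toLex_le.mp hab).trans (seqLe_iff_toLex_le.mp hbc)

lemma seqLe_iff_not_seqLt : seqLe a b ↔ ¬seqLt b a := by
  rw [seqLe_iff_toLex_le, seqLt_iff_toLex_lt]
  exact not_lt.symm

lemma seqLt_complSeq_iff : seqLt (complSeq a) (complSeq b) ↔ seqLt b a := by
  simp only [seqLt, complSeq, Bool.not_inj_iff, Bool.not_eq_false', Bool.not_eq_true']
  exact exists_congr fun n => ⟨fun ⟨h, ha, hb⟩ => ⟨fun k hk => (h k hk).symm, hb, ha⟩,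
    fun ⟨h, hb, ha⟩ => ⟨fun k hk => (h k hk).symm, ha, hb⟩⟩

lemma seqLe_complSeq_iff : seqLe (complSeq a) (complSeq b) ↔ seqLe b a := by
  rw [seqLe, seqLe, seqLt_complSeq_iff, eq_comm,
    (Function.LeftInverse.injective complSeq_complSeq).eq_iff]

end Order

lemma mem_Fset_iff {a x : ℕ → Bool} :
    x ∈ Fset a ↔ (∀ n, seqLe a (shiftSeq n x)) ∧ ∀ n, seqLe a (shiftSeq n (complSeq x)) := by
  have hcompl : ∀ n, seqLe (shiftSeq n x) (complSeq a) ↔ seqLe a (shiftSeq n (complSeq x)) :=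
    fun n => by
      rw [← seqLe_complSeq_iff, complSeq_complSeq]
      rfl
  simp only [Fset, Set.mem_ofPred_eq, hcompl, forall_and]

section Periodic

variable {c : List Bool}

lemma perSeq_add_mul_length (j q : ℕ) : perSeq c (j + q * c.length) = perSeq c j := by
  simp only [perSeq, Nat.add_mul_mod_self_right]

lemma perSeq_eq_wordSeq {j : ℕ} (hj : j < c.length) : perSeq c j = wordSeq c j := by
  simp only [perSeq, wordSeq, Nat.mod_eq_of_lt hj]

lemma wordSeq_le_perSeq : seqLe (wordSeq c) (perSeq c) := by
  rw [seqLe_iff_toLex_le]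
  refine Pi.toLex_monotone fun j => ?_
  by_cases hj : j < c.length
  · rw [perSeq_eq_wordSeq hj]
  · have hword : wordSeq c j = false := List.getD_eq_default _ _ (not_lt.mp hj)
    rw [hword]
    exact Bool.false_le _

lemma exists_shift_lt_wordSeq_of_shift_lt_perSeq (hc : c ≠ []) {y : ℕ → Bool} {n : ℕ}
    (h : seqLt (shiftSeq n y) (perSeq c)) : ∃ k, seqLt (shiftSeq k y) (wordSeq c) := by
  obtain ⟨m, hagree, hy, hper⟩ := h
  set L := c.length
  have hr : m % L < L := Nat.mod_lt _ (List.length_pos_iff.mpr hc)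
  have hm : m % L + m / L * L = m := by rw [mul_comm]; exact Nat.mod_add_div m L
  have hshift : ∀ j, shiftSeq (n + m / L * L) y j = shiftSeq n y (j + m / L * L) :=
    fun j => congrArg y (by ring)
  refine ⟨n + m / L * L, m % L, fun j hj => ?_, ?_, ?_⟩
  · rw [hshift, hagree _ (by omega), perSeq_add_mul_length, perSeq_eq_wordSeq (by omega)]
  · rwa [hshift, hm]
  · rwa [← perSeq_eq_wordSeq hr, ← perSeq_add_mul_length _ (m / L), hm]

lemma forall_wordSeq_le_shiftSeq_iff (hc : c ≠ []) {y : ℕ → Bool} :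
    (∀ n, seqLe (wordSeq c) (shiftSeq n y)) ↔ ∀ n, seqLe (perSeq c) (shiftSeq n y) := by
  refine ⟨fun h n => seqLe_iff_not_seqLt.mpr fun hlt => ?_,
    fun h n => seqLe_trans wordSeq_le_perSeq (h n)⟩
  obtain ⟨k, hk⟩ := exists_shift_lt_wordSeq_of_shift_lt_perSeq hc hlt
  exact seqLe_iff_not_seqLt.mp (h k) hk

end Periodic

theorem stmt1 (c : List Bool) (hc : c ≠ []) :
    Fset (wordSeq c) = Fset (perSeq c) := by
  ext x
  simp only [mem_Fset_iff, forall_wordSeq_le_shiftSeq_iff hc]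
end

section
/- Let c = u u* be a finite non-empty binary word consisting of a word u followed by its bitwise complement u*. If x ∈ F(c) contains the factor u, then x = w (u u*)^∞ for some finite word w not containing the factor u. -/
/-!
Write `c = u u* 0^∞`, so `c' = u* u 1^∞`. If `σᵐ x` begins with `u`, it shares that prefix with
`c ≤ σᵐ x`, so shifting past it gives `u* 0^∞ = σ^|u| c ≤ σ^(m+|u|) x ≤ c'`; both bounds begin
with `u*`, hence so does `σ^(m+|u|) x`. Symmetrically, `σ^|u| c' = u 1^∞` and `c` both begin with
`u`, so every occurrence of `u*` is followed by `u`. Thus from the first occurrence of `u` on, `x`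
is `(u u*)^∞`, and the prefix before it contains no `u` by minimality.
-/

open Filter MeasureTheory

lemma seqLe_shiftSeq {a b : ℕ → Bool} {L : ℕ} (h : seqLe a b) (hab : ∀ j < L, a j = b j) :
    seqLe (shiftSeq L a) (shiftSeq L b) := by
  rcases h with rfl | ⟨n, hn, hna, hnb⟩
  · exact Or.inl rfl
  · have hLn : L ≤ n := by
      by_contra! hnL
      rw [hab n hnL, hnb] at hna
      exact Bool.noConfusion hna
    refine Or.inr ⟨n - L, fun k hk => hn (k + L) (by omega), ?_, ?_⟩ <;>
      simpa only [shiftSeq, Nat.sub_add_cancel hLn]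

lemma eq_of_seqLe_of_seqLe {a x b : ℕ → Bool} {L : ℕ} (hax : seqLe a x) (hxb : seqLe x b)
    (hab : ∀ j < L, a j = b j) : ∀ j < L, x j = a j := by
  rcases hax with rfl | ⟨n, hn, hna, hnx⟩
  · exact fun _ _ => rfl
  have hLn : L ≤ n := by
    by_contra! hnL
    have hnb : b n = false := hab n hnL ▸ hna
    rcases hxb with rfl | ⟨n', hn', hxn', hbn'⟩
    · rw [hnx] at hnb; exact Bool.noConfusion hnb
    rcases lt_trichotomy n' n with h | rfl | h
    · rw [← hn n' h, hab n' (h.trans hnL), hbn'] at hxn'; exact Bool.noConfusion hxn'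
    · rw [hnx] at hxn'; exact Bool.noConfusion hxn'
    · rw [hn' n h, hnb] at hnx; exact Bool.noConfusion hnx
  exact fun j hj => (hn j (lt_of_lt_of_le hj hLn)).symm

lemma shiftSeq_shiftSeq (k l : ℕ) (x : ℕ → Bool) :
    shiftSeq k (shiftSeq l x) = shiftSeq (l + k) x := by
  funext n
  simp only [shiftSeq, Nat.add_assoc, Nat.add_comm k l]

def OccursAt (v : List Bool) (x : ℕ → Bool) (m : ℕ) : Prop :=
  ∀ j < v.length, x (m + j) = v.getD j false

lemma occursAt_iff_shiftSeq {v : List Bool} {x : ℕ → Bool} {m : ℕ} :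
    OccursAt v x m ↔ ∀ j < v.length, shiftSeq m x j = v.getD j false := by
  simp only [OccursAt, shiftSeq, Nat.add_comm m]

lemma occursAt_append {v w : List Bool} {x : ℕ → Bool} {m : ℕ} :
    OccursAt (v ++ w) x m ↔ OccursAt v x m ∧ OccursAt w x (m + v.length) := by
  simp only [OccursAt, List.length_append]
  constructor
  · intro h
    refine ⟨fun j hj => ?_, fun j hj => ?_⟩
    · rw [h j (by omega), List.getD_append _ _ _ _ hj]
    · rw [Nat.add_assoc, h _ (by omega), List.getD_append_right _ _ _ _ (by omega),
        Nat.add_sub_cancel_left]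
  · rintro ⟨hv, hw⟩ j hj
    rcases lt_or_ge j v.length with hjv | hjv
    · rw [List.getD_append _ _ _ _ hjv, hv j hjv]
    · obtain ⟨i, rfl⟩ := Nat.exists_eq_add_of_le hjv
      rw [List.getD_append_right _ _ _ _ hjv, Nat.add_sub_cancel_left, ← Nat.add_assoc,
        hw i (by omega)]

lemma eq_perSeq_of_occursAt {v : List Bool} (hv : v ≠ []) {x : ℕ → Bool}
    (hstep : ∀ m, OccursAt v x m → OccursAt v x (m + v.length)) {m : ℕ} (hm : OccursAt v x m) :
    ∀ n, x (m + n) = perSeq v n := by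
  have hperiodic : ∀ k, OccursAt v x (m + k * v.length) := by
    intro k
    induction k with
    | zero => simpa using hm
    | succ k ih => simpa only [Nat.succ_mul, Nat.add_assoc] using hstep _ ih
  intro n
  rw [perSeq, ← hperiodic (n / v.length) _ (Nat.mod_lt _ (List.length_pos_iff.mpr hv)),
    Nat.add_assoc, Nat.div_add_mod']

section OccursInFset

variable {u : List Bool} {x : ℕ → Bool} {m : ℕ}

lemma getD_map_not {j : ℕ} (hj : j < u.length) :
    (u.map (fun b => !b)).getD j false = !u.getD j false := by
  simp [List.getD_eq_getElem?_getD, List.getElem?_eq_getElem hj]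

lemma wordSeq_append_map_not_of_lt {j : ℕ} (hj : j < u.length) :
    wordSeq (u ++ u.map (fun b => !b)) j = u.getD j false :=
  List.getD_append _ _ _ _ hj

lemma wordSeq_append_map_not_add {j : ℕ} (hj : j < u.length) :
    wordSeq (u ++ u.map (fun b => !b)) (j + u.length) = !u.getD j false := by
  rw [wordSeq, List.getD_append_right _ _ _ _ (by omega), Nat.add_sub_cancel, getD_map_not hj]

lemma occursAt_map_not_of_occursAt (hx : x ∈ Fset (wordSeq (u ++ u.map (fun b => !b))))
    (h : OccursAt u x m) : OccursAt (u.map (fun b => !b)) x (m + u.length) := by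
  have hprefix : ∀ j < u.length, wordSeq (u ++ u.map (fun b => !b)) j = shiftSeq m x j :=
    fun j hj => by rw [wordSeq_append_map_not_of_lt hj, (occursAt_iff_shiftSeq.mp h) j hj]
  have hlow : seqLe (shiftSeq u.length (wordSeq (u ++ u.map (fun b => !b))))
      (shiftSeq (m + u.length) x) := by
    simpa only [shiftSeq_shiftSeq] using seqLe_shiftSeq (hx m).1 hprefix
  have hsq := eq_of_seqLe_of_seqLe (L := u.length) hlow (hx (m + u.length)).2 fun j hj => by
    simp only [shiftSeq, complSeq, wordSeq_append_map_not_add hj, wordSeq_append_map_not_of_lt hj]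
  refine occursAt_iff_shiftSeq.mpr fun j hj => ?_
  rw [List.length_map] at hj
  rw [hsq j hj, shiftSeq, wordSeq_append_map_not_add hj, getD_map_not hj]

lemma occursAt_of_occursAt_map_not (hx : x ∈ Fset (wordSeq (u ++ u.map (fun b => !b))))
    (h : OccursAt (u.map (fun b => !b)) x m) : OccursAt u x (m + u.length) := by
  have hprefix : ∀ j < u.length,
      shiftSeq m x j = complSeq (wordSeq (u ++ u.map (fun b => !b))) j := fun j hj => by
    rw [complSeq, wordSeq_append_map_not_of_lt hj,
      (occursAt_iff_shiftSeq.mp h) j (by rwa [List.length_map]), getD_map_not hj]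
  have hup : seqLe (shiftSeq (m + u.length) x)
      (shiftSeq u.length (complSeq (wordSeq (u ++ u.map (fun b => !b))))) := by
    simpa only [shiftSeq_shiftSeq] using seqLe_shiftSeq (hx m).2 hprefix
  have hsq := eq_of_seqLe_of_seqLe (L := u.length) (hx (m + u.length)).1 hup fun j hj => by
    simp only [shiftSeq, complSeq, wordSeq_append_map_not_add hj, wordSeq_append_map_not_of_lt hj,
      Bool.not_not]
  exact occursAt_iff_shiftSeq.mpr fun j hj => by rw [hsq j hj, wordSeq_append_map_not_of_lt hj]

lemma occursAt_append_map_not (hx : x ∈ Fset (wordSeq (u ++ u.map (fun b => !b))))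
    (h : OccursAt u x m) : OccursAt (u ++ u.map (fun b => !b)) x m :=
  occursAt_append.mpr ⟨h, occursAt_map_not_of_occursAt hx h⟩

lemma occursAt_append_map_not_add_length (hx : x ∈ Fset (wordSeq (u ++ u.map (fun b => !b))))
    (h : OccursAt (u ++ u.map (fun b => !b)) x m) :
    OccursAt (u ++ u.map (fun b => !b)) x (m + (u ++ u.map (fun b => !b)).length) := by
  have hu := occursAt_of_occursAt_map_not hx (occursAt_append.mp h).2
  rw [List.length_append, List.length_map, ← Nat.add_assoc]
  exact occursAt_append_map_not hx hu

end OccursInFset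

theorem stmt3 (u : List Bool) (hu : u ≠ []) (x : ℕ → Bool)
    (hx : x ∈ Fset (wordSeq (u ++ u.map (fun b => !b))))
    (hocc : ∃ m, ∀ j < u.length, x (m + j) = u.getD j false) :
    ∃ w : List Bool,
      (¬ ∃ m, m + u.length ≤ w.length ∧
          ∀ j < u.length, w.getD (m + j) false = u.getD j false) ∧
      ∀ n, x (w.length + n) = perSeq (u ++ u.map (fun b => !b)) n := by
  classical
  let m := Nat.find hocc
  have hm : OccursAt u x m := Nat.find_spec hocc
  refine ⟨List.ofFn fun i : Fin m => x i, ?_, ?_⟩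
  · rintro ⟨m', hm', hprefix⟩
    rw [List.length_ofFn] at hm'
    have hL := List.length_pos_iff.mpr hu
    refine Nat.find_min hocc (show m' < m by omega) fun j hj => ?_
    rw [← hprefix j hj, List.getD_eq_getElem _ _ (by rw [List.length_ofFn]; omega), List.getElem_ofFn]
  · rw [List.length_ofFn]
    exact eq_perSeq_of_occursAt (by simpa using hu) (fun _ => occursAt_append_map_not_add_length hx)
      (occursAt_append_map_not hx hm)
end

section
/- For any non-empty binary sequence s (finite or infinite) and integer N, the following are equivalent: (i) σⁿ(s) > s for all 0 < n < N; (ii) s[1,n]^∞ < s for all 0 < n < N. -/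
open Filter MeasureTheory

private lemma perProp (s : ℕ → Bool) (n j : ℕ) (hn : 0 < n)
    (h : ∀ k < j, s k = s (k + n)) :
    ∀ m, m < j + n → s m = s (m % n) := by
  intro m
  induction m using Nat.strong_induction_on with
  | _ m ih =>
    intro hm
    rcases lt_or_ge m n with hmn | hmn
    · rw [Nat.mod_eq_of_lt hmn]
    · have e1 : s (m - n) = s m := by
        have := h (m - n) (by omega)
        rwa [show m - n + n = m by omega] at this
      have e2 : s (m - n) = s ((m - n) % n) := ih (m - n) (by omega) (by omega)
      have e3 : (m - n) % n = m % n := by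
        conv_rhs => rw [show m = m - n + n by omega]
        rw [Nat.add_mod_right]
      rw [← e1, e2, e3]

private lemma fwdCore (s : ℕ → Bool) (n j : ℕ) (hn : 0 < n)
    (hag : ∀ k < j, s k = s (k + n)) (hj0 : s j = false) :
    (∀ k < j + n, s (k % n) = s k) ∧ s ((j + n) % n) = false := by
  have hper := perProp s n j hn hag
  refine ⟨fun k hk => (hper k hk).symm, ?_⟩
  have := hper j (by omega)
  rw [Nat.add_mod_right, ← this, hj0]

private lemma bwdCore (s : ℕ → Bool) (n j : ℕ) (hn : 0 < n)
    (hag : ∀ k < j, s (k % n) = s k) (hj0 : s (j % n) = false) (hj1 : s j = true) :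
    n ≤ j ∧ (∀ k < j - n, s k = s (k + n)) ∧ s (j - n) = false ∧ s (j - n + n) = true := by
  have hjn : n ≤ j := by
    by_contra hc
    push_neg at hc
    rw [Nat.mod_eq_of_lt hc, hj1] at hj0
    exact Bool.noConfusion hj0
  refine ⟨hjn, ?_, ?_, ?_⟩
  · intro k hk
    have e1 := hag k (by omega)
    have e2 := hag (k + n) (by omega)
    rw [Nat.add_mod_right] at e2
    rw [← e1, e2]
  · have e1 := hag (j - n) (by omega)
    have e : (j - n) % n = j % n := by
      conv_rhs => rw [show j = j - n + n by omega]
      rw [Nat.add_mod_right]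
    rw [← e1, e, hj0]
  · rwa [show j - n + n = j by omega]

private lemma infPart (s : ℕ → Bool) (n : ℕ) (hn : 0 < n) :
    seqLt s (shiftSeq n s) ↔ seqLt (fun m => s (m % n)) s := by
  constructor
  · rintro ⟨j, hag, hj0, hj1⟩
    obtain ⟨h1, h2⟩ := fwdCore s n j hn hag hj0
    exact ⟨j + n, h1, h2, hj1⟩
  · rintro ⟨j, hag, hj0, hj1⟩
    obtain ⟨hjn, h1, h2, h3⟩ := bwdCore s n j hn hag hj0 hj1
    exact ⟨j - n, h1, h2, h3⟩

private lemma wordSeq_take (w : List Bool) (L m : ℕ) :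
    wordSeq (w.take L) m = if m < L then wordSeq w m else false := by
  rcases lt_or_ge m L with h | h
  · rw [if_pos h]
    simp only [wordSeq, List.getD_eq_getElem?_getD, List.getElem?_take, if_pos h]
  · rw [if_neg (by omega)]
    have hle : (w.take L).length ≤ m := by
      rw [List.length_take]; omega
    rw [wordSeq, List.getD_eq_default _ _ hle]

private lemma wordSeq_drop (w : List Bool) (n m : ℕ) :
    wordSeq (w.drop n) m = wordSeq w (m + n) := by
  simp only [wordSeq, List.getD_eq_getElem?_getD, List.getElem?_drop]
  rw [Nat.add_comm]

private lemma wordSeq_ofFn (w : List Bool) (n m : ℕ) :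
    wordSeq (List.ofFn fun i : Fin w.length => w.getD (i.val % n) false) m =
      if m < w.length then wordSeq w (m % n) else false := by
  rcases lt_or_ge m w.length with h | h
  · rw [if_pos h]
    have hm : m < (List.ofFn fun i : Fin w.length => w.getD (i.val % n) false).length := by
      rw [List.length_ofFn]; exact h
    rw [wordSeq, List.getD_eq_getElem _ _ hm, List.getElem_ofFn]
    rfl
  · rw [if_neg (by omega)]
    have hle : (List.ofFn fun i : Fin w.length => w.getD (i.val % n) false).length ≤ m := by
      rw [List.length_ofFn]; exact h
    rw [wordSeq, List.getD_eq_default _ _ hle]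

private lemma wordSeq_true_lt (w : List Bool) (m : ℕ) (h : wordSeq w m = true) :
    m < w.length := by
  by_contra hc
  push_neg at hc
  rw [wordSeq, List.getD_eq_default _ _ hc] at h
  exact Bool.noConfusion h

private lemma finPart (w : List Bool) (n : ℕ) (hn : 0 < n) (hnw : n < w.length) :
    seqLt (wordSeq (w.take (w.length - n))) (wordSeq (w.drop n)) ↔
    seqLt (wordSeq (List.ofFn fun i : Fin w.length => w.getD (i.val % n) false))
      (wordSeq w) := by
  constructor
  · rintro ⟨j, hag, hj0, hj1⟩
    rw [wordSeq_drop] at hj1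
    have hjlen : j + n < w.length := wordSeq_true_lt w _ hj1
    rw [wordSeq_take, if_pos (by omega)] at hj0
    have hag' : ∀ k < j, wordSeq w k = wordSeq w (k + n) := by
      intro k hk
      have := hag k hk
      rwa [wordSeq_take, wordSeq_drop, if_pos (by omega)] at this
    obtain ⟨h1, h2⟩ := fwdCore (wordSeq w) n j hn hag' hj0
    refine ⟨j + n, ?_, ?_, hj1⟩
    · intro k hk
      rw [wordSeq_ofFn, if_pos (by omega)]
      exact h1 k hk
    · rw [wordSeq_ofFn, if_pos hjlen]
      exact h2
  · rintro ⟨j, hag, hj0, hj1⟩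
    have hjlen : j < w.length := wordSeq_true_lt w _ hj1
    rw [wordSeq_ofFn, if_pos hjlen] at hj0
    have hag' : ∀ k < j, wordSeq w (k % n) = wordSeq w k := by
      intro k hk
      have := hag k hk
      rwa [wordSeq_ofFn, if_pos (by omega)] at this
    obtain ⟨hjn, h1, h2, h3⟩ := bwdCore (wordSeq w) n j hn hag' hj0 hj1
    refine ⟨j - n, ?_, ?_, ?_⟩
    · intro k hk
      rw [wordSeq_take, wordSeq_drop, if_pos (by omega)]
      exact h1 k hk
    · rw [wordSeq_take, if_pos (by omega)]
      exact h2
    · rw [wordSeq_drop]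
      exact h3

theorem stmt12 :
    (∀ s : ℕ → Bool, ∀ N : ℕ,
        (∀ n, 0 < n → n < N → seqLt s (shiftSeq n s)) ↔
        (∀ n, 0 < n → n < N → seqLt (fun m => s (m % n)) s)) ∧
    (∀ w : List Bool, w ≠ [] → ∀ N ≤ w.length,
        (∀ n, 0 < n → n < N →
            seqLt (wordSeq (w.take (w.length - n))) (wordSeq (w.drop n))) ↔
        (∀ n, 0 < n → n < N →
            seqLt (wordSeq (List.ofFn fun i : Fin w.length => w.getD (i.val % n) false))
              (wordSeq w))) := by
  constructor
  · intro s N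
    constructor
    · intro h n hn hN
      exact (infPart s n hn).mp (h n hn hN)
    · intro h n hn hN
      exact (infPart s n hn).mpr (h n hn hN)
  · intro w _ N hN
    constructor
    · intro h n hn hN'
      exact (finPart w n hn (by omega)).mp (h n hn hN')
    · intro h n hn hN'
      exact (finPart w n hn (by omega)).mpr (h n hn hN')
end

section
/- The set ISB of infinite shift-bounded binary sequences, identified with a subset of [0,1] via binary expansion, has Lebesgue measure zero. -/
open Filter MeasureTheory

/-! A sequence `s` with `s < σⁿ(s)` for all `n > 0` has a first `1`, at position `a` say, and then
every aligned block of `a + 1` consecutive digits of `s` contains a `1`: a zero block at position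
`n` would give `σⁿ(s) < s`. For fixed block length `m`, the binary values of such sequences form a
set `A ⊆ [0, 1]` covered by the `2 ^ m - 1` translates of `2⁻ᵐ • A` indexed by the nonzero first
blocks, so `A` is Lebesgue null. -/

open scoped ENNReal Pointwise

section SelfSimilar

variable {E : Type*} [NormedAddCommGroup E] [NormedSpace ℝ E] [MeasurableSpace E] [BorelSpace E]
  [FiniteDimensional ℝ E] (μ : Measure E) [μ.IsAddHaarMeasure]

theorem Measure.addHaar_eq_zero_of_subset_biUnion_vadd_smul {ι : Type*} {A : Set E}
    (hA : μ A ≠ ∞) (s : Finset ι) (t : ι → E) (r : ℝ)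
    (hr : (s.card : ℝ) * |r| ^ Module.finrank ℝ E < 1) (hcover : A ⊆ ⋃ i ∈ s, t i +ᵥ r • A) :
    μ A = 0 := by
  have hc : (s.card : ℝ≥0∞) * ENNReal.ofReal (|r| ^ Module.finrank ℝ E) < 1 := by
    rwa [← ENNReal.ofReal_natCast, ← ENNReal.ofReal_mul (by positivity), ENNReal.ofReal_lt_one]
  have hle : μ A ≤ s.card * ENNReal.ofReal (|r| ^ Module.finrank ℝ E) * μ A :=
    calc μ A ≤ ∑ i ∈ s, μ (t i +ᵥ r • A) :=
          (measure_mono hcover).trans (measure_biUnion_finset_le _ _)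
      _ = _ := by
        simp only [measure_vadd, Measure.addHaar_smul, abs_pow, Finset.sum_const, nsmul_eq_mul,
          mul_assoc]
  by_contra h0
  exact (ENNReal.mul_lt_mul_left h0 hA hc).not_ge (by simpa using hle)

end SelfSimilar

section BinaryExpansion

lemma cond_div_two_pow_succ_le (b : Bool) (n : ℕ) :
    (cond b (1 : ℝ) 0) / 2 ^ (n + 1) ≤ 1 / 2 / 2 ^ n := by
  rw [div_div, ← pow_succ']
  gcongr
  cases b <;> simp

lemma summable_seqVal (x : ℕ → Bool) :
    Summable fun n : ℕ => (cond (x n) (1 : ℝ) 0) / 2 ^ (n + 1) :=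
  Summable.of_nonneg_of_le (fun n => by cases x n <;> simp)
    (fun n => cond_div_two_pow_succ_le (x n) n) (summable_geometric_two' 1)

lemma seqVal_mem_Icc (x : ℕ → Bool) : seqVal x ∈ Set.Icc (0 : ℝ) 1 := by
  refine ⟨tsum_nonneg fun n => by cases x n <;> simp, ?_⟩
  calc seqVal x ≤ ∑' n : ℕ, (1 : ℝ) / 2 / 2 ^ n :=
        (summable_seqVal x).tsum_le_tsum (fun n => cond_div_two_pow_succ_le (x n) n)
          (summable_geometric_two' 1)
    _ = 1 := tsum_geometric_two' 1

lemma seqVal_eq_sum_add_seqVal_shiftSeq (m : ℕ) (x : ℕ → Bool) :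
    seqVal x = ∑ i ∈ Finset.range m, (cond (x i) (1 : ℝ) 0) / 2 ^ (i + 1)
      + ((2 : ℝ) ^ m)⁻¹ * seqVal (shiftSeq m x) := by
  rw [seqVal, ← (summable_seqVal x).sum_add_tsum_nat_add m, seqVal, ← tsum_mul_left]
  congr 1
  refine tsum_congr fun i => ?_
  rw [shiftSeq, show i + m + 1 = m + (i + 1) by ring, pow_add]
  field_simp

end BinaryExpansion

def oneInEveryBlock (m : ℕ) : Set (ℕ → Bool) := {x | ∀ k : ℕ, ∃ i < m, x (k * m + i) = true}

lemma shiftSeq_mem_oneInEveryBlock {m : ℕ} {x : ℕ → Bool} (hx : x ∈ oneInEveryBlock m) :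
    shiftSeq m x ∈ oneInEveryBlock m := fun k => by
  obtain ⟨i, hi, h⟩ := hx (k + 1)
  exact ⟨i, hi, by rwa [shiftSeq, show k * m + i + m = (k + 1) * m + i by ring]⟩

lemma seqVal_image_oneInEveryBlock_subset (m : ℕ) :
    seqVal '' oneInEveryBlock m ⊆
      ⋃ b ∈ (Finset.univ.erase fun _ => false : Finset (Fin m → Bool)),
        (∑ i : Fin m, (cond (b i) (1 : ℝ) 0) / 2 ^ ((i : ℕ) + 1)) +ᵥ
          ((2 : ℝ) ^ m)⁻¹ • seqVal '' oneInEveryBlock m := by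
  rintro _ ⟨x, hx, rfl⟩
  refine Set.mem_iUnion₂.2 ⟨fun i => x i, Finset.mem_erase.2 ⟨?_, Finset.mem_univ _⟩, ?_⟩
  · obtain ⟨i, hi, hxi⟩ := hx 0
    rw [zero_mul, zero_add] at hxi
    intro hb
    simpa [hxi] using congrFun hb ⟨i, hi⟩
  · refine ⟨_, Set.smul_mem_smul_set ⟨_, shiftSeq_mem_oneInEveryBlock hx, rfl⟩, ?_⟩
    dsimp only
    rw [vadd_eq_add, smul_eq_mul, seqVal_eq_sum_add_seqVal_shiftSeq m x,
      Fin.sum_univ_eq_sum_range (fun i => (cond (x i) (1 : ℝ) 0) / 2 ^ (i + 1))]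

lemma volume_seqVal_image_oneInEveryBlock (m : ℕ) :
    volume (seqVal '' oneInEveryBlock m) = 0 := by
  refine Measure.addHaar_eq_zero_of_subset_biUnion_vadd_smul volume ?_ _ _ _ ?_
    (seqVal_image_oneInEveryBlock_subset m)
  · have hsub : seqVal '' oneInEveryBlock m ⊆ Set.Icc 0 1 :=
      Set.image_subset_iff.2 fun x _ => seqVal_mem_Icc x
    exact ((measure_mono hsub).trans_lt measure_Icc_lt_top).ne
  · rw [Finset.card_erase_of_mem (Finset.mem_univ _), Finset.card_univ, Fintype.card_fun,
      Fintype.card_bool, Fintype.card_fin, Module.finrank_self, pow_one,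
      abs_of_pos (by positivity), Nat.cast_sub Nat.one_le_two_pow, sub_mul]
    push_cast
    rw [mul_inv_cancel₀ (by positivity)]
    linarith [inv_pos.2 (pow_pos (two_pos (α := ℝ)) m)]

lemma seqLt_asymm {a b : ℕ → Bool} (hab : seqLt a b) (hba : seqLt b a) : False := by
  obtain ⟨n₁, hpre₁, ha₁, hb₁⟩ := hab
  obtain ⟨n₂, hpre₂, hb₂, ha₂⟩ := hba
  rcases lt_trichotomy n₁ n₂ with h | rfl | h
  · simpa [ha₁, hb₁] using hpre₂ n₁ h
  · simp_all
  · simpa [ha₂, hb₂] using hpre₁ n₂ h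

lemma seqLt_shiftSeq_of_zeros {s : ℕ → Bool} {a n : ℕ} (ha : s a = true)
    (hbefore : ∀ j < a, s j = false) (hzero : ∀ j ≤ a, s (j + n) = false) :
    seqLt (shiftSeq n s) s :=
  ⟨a, fun j hj => (hzero j hj.le).trans (hbefore j hj).symm, hzero a le_rfl, ha⟩

lemma exists_mem_oneInEveryBlock {s : ℕ → Bool}
    (hs : ∀ n, 0 < n → seqLt s (shiftSeq n s)) : ∃ m, s ∈ oneInEveryBlock m := by
  classical
  have hone : ∃ k, s k = true := by
    obtain ⟨n, -, -, hn⟩ := hs 1 one_pos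
    exact ⟨n + 1, hn⟩
  set a := Nat.find hone
  have hbefore : ∀ j < a, s j = false := fun j hj => by simpa using Nat.find_min hone hj
  refine ⟨a + 1, fun k => ?_⟩
  rcases Nat.eq_zero_or_pos k with rfl | hk
  · exact ⟨a, a.lt_succ_self, by simpa using Nat.find_spec hone⟩
  by_contra! hzero
  refine seqLt_asymm (hs _ (Nat.mul_pos hk a.succ_pos))
    (seqLt_shiftSeq_of_zeros (Nat.find_spec hone) hbefore fun j hj => ?_)
  simpa [add_comm] using hzero j (Nat.lt_succ_of_le hj)

theorem stmt14 :
    volume (seqVal ''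
      {s : ℕ → Bool | ∀ n, 0 < n →
        seqLt s (shiftSeq n s) ∧ seqLt (shiftSeq n s) (complSeq s)}) = 0 := by
  refine measure_mono_null ?_ (measure_iUnion_null volume_seqVal_image_oneInEveryBlock)
  rw [← Set.image_iUnion]
  exact Set.image_mono fun s hs =>
    Set.mem_iUnion.2 (exists_mem_oneInEveryBlock fun n hn => (hs n hn).1)
end
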